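/- arXiv:2107.07458 — 2 statements merged into one kernel-verified Lean document; each statement's English description precedes it below -/
import Mathlib

section
/- For every infinite path ρ in a finite directed graph with n vertices (every vertex having an outgoing edge), there exists a lasso play h·c^ω that is occurrence-equivalent to ρ, where the history h has length at most n³ + n² and the cycle c has length at most n². -/
/-!
After some time `N` the play `ρ` only visits `Inf ρ`, and some stretch `ρ N … ρ M` with
`ρ (M + 1) = ρ N` visits all of it. The lasso follows a compressed copy of the history
`ρ 0 … ρ M` and then repeats a compressed copy of that stretch.

A walk is compressed by cutting it as `A ++ v :: C` at the first visit of the last new vertex `v`,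
so that `C ⊆ v :: A`, compressing `A` recursively and replacing `v :: C` by a walk with the same
endpoints that stays inside `v :: A`: as `A` has been visited already, only the endpoints of the
replacement matter. A loop-free replacement gives an equivalent walk of length at most `n²`;
replacing `v :: C` by its `n²`-compression instead also matches every prefix with an equivalent
prefix, at length at most `n³`.
-/

/-- An infinite path (play) in the directed graph with edge relation `E`. -/
def IsPlay {V : Type*} (E : V → V → Prop) (ρ : ℕ → V) : Prop := ∀ k, E (ρ k) (ρ (k + 1))

/-- The set of vertices occurring infinitely often. -/
def InfVisit {V : Type*} (ρ : ℕ → V) : Set V := {v | ∀ N, ∃ k, N ≤ k ∧ ρ k = v}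

/-- The prefix (history) of `ρ` of length `m+1`, as a list. -/
def prefixList {V : Type*} (ρ : ℕ → V) (m : ℕ) : List V := (List.range (m + 1)).map ρ

/-- Occurrence-equivalence of histories: same first vertex, same last vertex,
same set of occurring vertices. -/
def HistEquiv {V : Type*} (h h' : List V) : Prop :=
  h.head? = h'.head? ∧ h.getLast? = h'.getLast? ∧ {v | v ∈ h} = {v | v ∈ h'}

/-- Occurrence-equivalence of plays. -/
def PlayEquiv {V : Type*} (ρ ρ' : ℕ → V) : Prop :=
  InfVisit ρ = InfVisit ρ' ∧
  (∀ m, ∃ m', HistEquiv (prefixList ρ m) (prefixList ρ' m')) ∧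
  (∀ m', ∃ m, HistEquiv (prefixList ρ' m') (prefixList ρ m))

/-- The lasso play `h · c^ω` (with default vertex `d`). -/
def lassoPlay {V : Type*} (d : V) (h c : List V) (k : ℕ) : V :=
  if k < h.length then h.getD k d else c.getD ((k - h.length) % c.length) d

section

open List Filter

variable {V : Type*}

namespace HistEquiv

variable {l₁ l₂ l₃ l₁' l₂' : List V}

theorem refl (l : List V) : HistEquiv l l := ⟨rfl, rfl, rfl⟩

theorem symm (h : HistEquiv l₁ l₂) : HistEquiv l₂ l₁ := ⟨h.1.symm, h.2.1.symm, h.2.2.symm⟩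

theorem trans (h : HistEquiv l₁ l₂) (h' : HistEquiv l₂ l₃) : HistEquiv l₁ l₃ :=
  ⟨h.1.trans h'.1, h.2.1.trans h'.2.1, h.2.2.trans h'.2.2⟩

theorem mem_iff (h : HistEquiv l₁ l₂) {x : V} : x ∈ l₁ ↔ x ∈ l₂ := Set.ext_iff.1 h.2.2 x

theorem subset (h : HistEquiv l₁ l₂) : l₁ ⊆ l₂ := fun _ hx => h.mem_iff.1 hx

theorem ne_nil (h : HistEquiv l₁ l₂) (hl : l₁ ≠ []) : l₂ ≠ [] := by
  rintro rfl
  exact hl (head?_eq_none_iff.1 h.1)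

theorem append (h₁ : HistEquiv l₁ l₁') (h₂ : HistEquiv l₂ l₂') :
    HistEquiv (l₁ ++ l₂) (l₁' ++ l₂') :=
  ⟨by rw [head?_append, head?_append, h₁.1, h₂.1],
    by rw [getLast?_append, getLast?_append, h₁.2.1, h₂.2.1],
    Set.ext fun _ => by simp [h₁.mem_iff, h₂.mem_iff]⟩

end HistEquiv

def PrefixCovered (l r : List V) : Prop :=
  ∀ p, p <+: l → p ≠ [] → ∃ q, q <+: r ∧ HistEquiv p q

theorem List.IsPrefix.head?_eq {p l : List V} (h : p <+: l) (hp : p ≠ []) :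
    p.head? = l.head? := by
  obtain ⟨a, p, rfl⟩ := exists_cons_of_ne_nil hp
  obtain ⟨t, rfl⟩ := h
  rfl

theorem List.IsPrefix.append_cases {p A B : List V} (h : p <+: A ++ B) :
    p <+: A ∨ ∃ p', p = A ++ p' ∧ p' <+: B := by
  obtain ⟨t, ht⟩ := h
  rcases append_eq_append_iff.1 ht with ⟨a, rfl, -⟩ | ⟨b, rfl, rfl⟩
  · exact Or.inl (prefix_append _ _)
  · exact Or.inr ⟨b, rfl, prefix_append _ _⟩

theorem List.exists_prefix_getLast?_eq {l : List V} {u : V} (hu : u ∈ l) :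
    ∃ q, q <+: l ∧ q ≠ [] ∧ q.getLast? = some u := by
  obtain ⟨s, t, rfl⟩ := append_of_mem hu
  exact ⟨s ++ [u], ⟨t, by simp⟩, by simp, by simp⟩

theorem List.mem_append_iff_of_head? {A p : List V} {v : V} (hp : p.head? = some v)
    (hpA : p ⊆ v :: A) {x : V} : x ∈ A ++ p ↔ x ∈ v :: A := by
  constructor
  · rintro hx
    rcases mem_append.1 hx with hx | hx
    · exact mem_cons_of_mem v hx
    · exact hpA hx
  · intro hx
    rcases mem_cons.1 hx with rfl | hx
    · exact mem_append_right A (mem_of_mem_head? hp)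
    · exact mem_append_left p hx

theorem histEquiv_append_of_subset_cons {A p q : List V} {v : V} (hp : p.head? = some v)
    (hq : q.head? = some v) (hlast : p.getLast? = q.getLast?) (hpA : p ⊆ v :: A)
    (hqA : q ⊆ v :: A) : HistEquiv (A ++ p) (A ++ q) :=
  ⟨by rw [head?_append, head?_append, hp, hq],
    by rw [getLast?_append, getLast?_append, hlast],
    Set.ext fun _ => (mem_append_iff_of_head? hp hpA).trans (mem_append_iff_of_head? hq hqA).symm⟩

theorem PrefixCovered.append_of_subset_cons {A A' B B' : List V} {v : V}
    (hA : PrefixCovered A A') (hAA' : HistEquiv A A') (hBB' : HistEquiv B B')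
    (hB : B.head? = some v) (hBA : B ⊆ v :: A) : PrefixCovered (A ++ B) (A' ++ B') := by
  intro p hp hp0
  rcases hp.append_cases with hpA | ⟨s, rfl, hs⟩
  · obtain ⟨q, hq, hpq⟩ := hA p hpA hp0
    exact ⟨q, hq.trans (prefix_append _ _), hpq⟩
  rcases eq_or_ne s [] with rfl | hs0
  · obtain ⟨q, hq, hpq⟩ := hA A prefix_rfl (by simpa using hp0)
    exact ⟨q, hq.trans (prefix_append _ _), by simpa using hpq⟩
  obtain ⟨u, hu⟩ := Option.isSome_iff_exists.1 (getLast?_isSome.2 hs0)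
  obtain ⟨q, hq, hq0, hqu⟩ :=
    exists_prefix_getLast?_eq (hBB'.subset (hs.subset (mem_of_getLast? hu)))
  refine ⟨A' ++ q, (prefix_append_right_inj A').2 hq, .trans ?_ (hAA'.append (.refl q))⟩
  refine histEquiv_append_of_subset_cons ?_ ?_ (hu.trans hqu.symm)
    (List.Subset.trans hs.subset hBA)
    (List.Subset.trans hq.subset (List.Subset.trans hBB'.symm.subset hBA))
  · rw [hs.head?_eq hs0, hB]
  · rw [hq.head?_eq hq0, ← hBB'.1, hB]

theorem List.exists_eq_append_cons_subset {l : List V} (hl : l ≠ []) :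
    ∃ A v C, l = A ++ v :: C ∧ v ∉ A ∧ C ⊆ v :: A := by
  induction l using reverseRecOn with
  | nil => exact absurd rfl hl
  | append_singleton l a ih =>
    rcases eq_or_ne l [] with rfl | hne
    · exact ⟨[], a, [], rfl, not_mem_nil, nil_subset _⟩
    obtain ⟨A, v, C, rfl, hvA, hC⟩ := ih hne
    by_cases ha : a ∈ v :: A
    · exact ⟨A, v, C ++ [a], by simp, hvA, append_subset.2 ⟨hC, cons_subset.2 ⟨ha, nil_subset _⟩⟩⟩
    · exact ⟨A ++ v :: C, a, [], rfl,
        fun h => ha ((mem_append_iff_of_head? rfl (cons_subset.2 ⟨mem_cons_self, hC⟩)).1 h),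
        nil_subset _⟩

theorem List.card_toFinset_append_cons [DecidableEq V] {A C : List V} {v : V} (hvA : v ∉ A)
    (hC : C ⊆ v :: A) : (A ++ v :: C).toFinset.card = A.toFinset.card + 1 := by
  have : (A ++ v :: C).toFinset = (v :: A).toFinset := by
    ext
    simp only [mem_toFinset]
    exact mem_append_iff_of_head? rfl (cons_subset.2 ⟨mem_cons_self, hC⟩)
  rw [this, toFinset_cons, Finset.card_insert_of_notMem (by simpa using hvA)]

theorem List.card_toFinset_le_of_subset [DecidableEq V] {l l' : List V} (h : l ⊆ l') :
    l.toFinset.card ≤ l'.toFinset.card :=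
  Finset.card_le_card fun _ hx => mem_toFinset.2 (h (mem_toFinset.1 hx))

section Walks

variable {E : V → V → Prop}

theorem List.IsChain.append_of_getLast?_head? {a b a' b' : List V} (h : IsChain E (a ++ b))
    (ha : IsChain E a') (hb : IsChain E b') (hlast : a'.getLast? = a.getLast?)
    (hhead : b'.head? = b.head?) : IsChain E (a' ++ b') :=
  isChain_append.2 ⟨ha, hb, by rw [hlast, hhead]; exact (isChain_append.1 h).2.2⟩

theorem List.IsChain.exists_nodup {l : List V} (hl : IsChain E l) :
    ∃ r, IsChain E r ∧ r.Nodup ∧ r.head? = l.head? ∧ r.getLast? = l.getLast? ∧ r ⊆ l := by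
  induction l with
  | nil => exact ⟨[], .nil, nodup_nil, rfl, rfl, Subset.refl _⟩
  | cons x xs ih =>
    obtain ⟨r, hr, hrd, hrh, hrl, hrs⟩ := ih hl.tail
    by_cases hx : x ∈ r
    · obtain ⟨r₁, r₂, rfl⟩ := append_of_mem hx
      refine ⟨x :: r₂, hr.infix (suffix_append _ _).isInfix,
        (suffix_append _ _).sublist.nodup hrd, rfl, by simp [getLast?_cons, ← hrl, getLast?_append],
        cons_subset_cons x fun y hy => hrs (mem_append_right _ (mem_cons_of_mem x hy))⟩
    · refine ⟨x :: r, List.isChain_cons.2 ⟨by rw [hrh]; exact (List.isChain_cons.1 hl).1, hr⟩,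
        nodup_cons.2 ⟨hx, hrd⟩, rfl, by rw [getLast?_cons, getLast?_cons, hrl],
        cons_subset_cons x hrs⟩

theorem List.IsChain.exists_histEquiv_length_le_sq [DecidableEq V] (l : List V)
    (hl : IsChain E l) :
    ∃ r, IsChain E r ∧ HistEquiv l r ∧ r.length ≤ l.toFinset.card ^ 2 := by
  rcases eq_or_ne l [] with rfl | hne
  · exact ⟨[], .nil, .refl _, le_rfl⟩
  obtain ⟨A, v, C, rfl, hvA, hC⟩ := exists_eq_append_cons_subset hne
  have hvC : v :: C ⊆ v :: A := cons_subset.2 ⟨mem_cons_self, hC⟩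
  obtain ⟨A', hA', hAA', hlenA'⟩ := exists_histEquiv_length_le_sq A (isChain_append.1 hl).1
  obtain ⟨D, hD, hDnd, hDh, hDl, hDC⟩ := (isChain_append.1 hl).2.1.exists_nodup
  refine ⟨A' ++ D, hl.append_of_getLast?_head? hA' hD hAA'.2.1.symm hDh,
    (histEquiv_append_of_subset_cons rfl hDh hDl.symm hvC (List.Subset.trans hDC hvC)).trans
      (hAA'.append (.refl D)), ?_⟩
  have hlenD : D.length ≤ A.toFinset.card + 1 := by
    rw [← toFinset_card_of_nodup hDnd, ← card_toFinset_append_cons hvA hC]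
    exact card_toFinset_le_of_subset (List.Subset.trans hDC (subset_append_right _ _))
  rw [length_append, card_toFinset_append_cons hvA hC]
  nlinarith
termination_by l.length

theorem List.IsChain.exists_histEquiv_prefixCovered [DecidableEq V] (l : List V)
    (hl : IsChain E l) :
    ∃ r, IsChain E r ∧ HistEquiv l r ∧ PrefixCovered l r ∧ PrefixCovered r l ∧
      r.length ≤ l.toFinset.card ^ 3 := by
  rcases eq_or_ne l [] with rfl | hne
  · have hnil : PrefixCovered ([] : List V) [] := fun _ hp hp0 => absurd (prefix_nil.1 hp) hp0
    exact ⟨[], .nil, .refl _, hnil, hnil, le_rfl⟩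
  obtain ⟨A, v, C, rfl, hvA, hC⟩ := exists_eq_append_cons_subset hne
  have hvC : v :: C ⊆ v :: A := cons_subset.2 ⟨mem_cons_self, hC⟩
  obtain ⟨A', hA', hAA', hcov, hcov', hlenA'⟩ :=
    exists_histEquiv_prefixCovered A (isChain_append.1 hl).1
  obtain ⟨D, hD, hCD, hlenD⟩ := (isChain_append.1 hl).2.1.exists_histEquiv_length_le_sq
  refine ⟨A' ++ D, hl.append_of_getLast?_head? hA' hD hAA'.2.1.symm hCD.1.symm,
    hAA'.append hCD, hcov.append_of_subset_cons hAA' hCD rfl hvC,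
    hcov'.append_of_subset_cons hAA'.symm hCD.symm hCD.1.symm
      (List.Subset.trans hCD.symm.subset (List.Subset.trans hvC (cons_subset_cons v hAA'.subset))),
    ?_⟩
  have hcardC : (v :: C).toFinset.card ≤ A.toFinset.card + 1 := by
    rw [← card_toFinset_append_cons hvA hC]
    exact card_toFinset_le_of_subset (subset_append_right _ _)
  rw [length_append, card_toFinset_append_cons hvA hC]
  have := Nat.pow_le_pow_left hcardC 2
  nlinarith
termination_by l.length

end Walks

section Plays

variable {f : ℕ → V} {m k : ℕ}

theorem prefixList_ne_nil (f : ℕ → V) (m : ℕ) : prefixList f m ≠ [] := by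
  simp [prefixList]

theorem head?_prefixList (f : ℕ → V) (m : ℕ) : (prefixList f m).head? = some (f 0) := by
  simp [prefixList, head?_range]

theorem getLast?_prefixList (f : ℕ → V) (m : ℕ) : (prefixList f m).getLast? = some (f m) := by
  simp [prefixList, getLast?_range]

theorem mem_prefixList {v : V} : v ∈ prefixList f m ↔ ∃ i ≤ m, f i = v := by
  simp [prefixList]

theorem take_prefixList (hk : k ≤ m) : (prefixList f m).take (k + 1) = prefixList f k := by
  rw [prefixList, ← map_take, take_range, Nat.min_eq_left (by omega), prefixList]

theorem prefixList_isPrefix (hk : k ≤ m) : prefixList f k <+: prefixList f m :=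
  take_prefixList (f := f) hk ▸ take_prefix _ _

theorem exists_eq_prefixList_of_isPrefix {p : List V} (hp : p <+: prefixList f m) (hp0 : p ≠ []) :
    ∃ k ≤ m, p = prefixList f k := by
  have hlen := hp.length_le
  have hpos := length_pos_iff.2 hp0
  rw [prefixList, length_map, length_range] at hlen
  refine ⟨p.length - 1, by omega, ?_⟩
  calc p = (prefixList f m).take (p.length - 1 + 1) := by
        rw [Nat.sub_add_cancel hpos]; exact prefix_iff_eq_take.1 hp
    _ = prefixList f (p.length - 1) := take_prefixList (by omega)

theorem IsPlay.isChain_prefixList {E : V → V → Prop} (hf : IsPlay E f) (m : ℕ) :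
    IsChain E (prefixList f m) := by
  rw [isChain_iff_getElem]
  intro i hi
  simpa [prefixList] using hf i

theorem setOf_mem_prefixList_of_le (hmk : m ≤ k) (hf : ∀ j, m < j → f j ∈ prefixList f m) :
    {v | v ∈ prefixList f k} = {v | v ∈ prefixList f m} := by
  ext v
  simp only [Set.mem_ofPred_eq, mem_prefixList]
  constructor
  · rintro ⟨i, hi, rfl⟩
    rcases le_or_gt i m with him | him
    · exact ⟨i, him, rfl⟩
    · exact mem_prefixList.1 (hf i him)
  · rintro ⟨i, hi, rfl⟩
    exact ⟨i, hi.trans hmk, rfl⟩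

theorem exists_histEquiv_prefixList_of_prefixCovered {ρ ρ' : ℕ → V} {m m' : ℕ}
    (hpre : HistEquiv (prefixList ρ m) (prefixList ρ' m'))
    (hcov : PrefixCovered (prefixList ρ m) (prefixList ρ' m'))
    (htail : ∀ k, m < k → ρ k ∈ prefixList ρ m ∧ ρ k ∈ InfVisit ρ')
    (htail' : ∀ k, m' < k → ρ' k ∈ prefixList ρ' m') (k : ℕ) :
    ∃ k', HistEquiv (prefixList ρ k) (prefixList ρ' k') := by
  rcases le_or_gt k m with hk | hk
  · obtain ⟨q, hq, hpq⟩ := hcov _ (prefixList_isPrefix hk) (prefixList_ne_nil ρ k)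
    obtain ⟨k', -, rfl⟩ := exists_eq_prefixList_of_isPrefix hq (hpq.ne_nil (prefixList_ne_nil ρ k))
    exact ⟨k', hpq⟩
  obtain ⟨k', hk', hρk⟩ := (htail k hk).2 (m' + 1)
  refine ⟨k', by simpa only [head?_prefixList] using hpre.1, by simp [getLast?_prefixList, hρk], ?_⟩
  rw [setOf_mem_prefixList_of_le hk.le fun j hj => (htail j hj).1,
    setOf_mem_prefixList_of_le (by omega : m' ≤ k') htail']
  exact hpre.2.2

theorem playEquiv_of_prefixList {ρ ρ' : ℕ → V} {m m' : ℕ}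
    (hpre : HistEquiv (prefixList ρ m) (prefixList ρ' m'))
    (hcov : PrefixCovered (prefixList ρ m) (prefixList ρ' m'))
    (hcov' : PrefixCovered (prefixList ρ' m') (prefixList ρ m))
    (hinf : InfVisit ρ = InfVisit ρ') (hsub : InfVisit ρ ⊆ {v | v ∈ prefixList ρ m})
    (htail : ∀ k, m < k → ρ k ∈ InfVisit ρ) (htail' : ∀ k, m' < k → ρ' k ∈ InfVisit ρ') :
    PlayEquiv ρ ρ' := by
  have hsub' : InfVisit ρ' ⊆ {v | v ∈ prefixList ρ' m'} := hinf ▸ hpre.2.2 ▸ hsub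
  exact ⟨hinf,
    exists_histEquiv_prefixList_of_prefixCovered hpre hcov
      (fun k hk => ⟨hsub (htail k hk), hinf ▸ htail k hk⟩) fun k hk => hsub' (htail' k hk),
    exists_histEquiv_prefixList_of_prefixCovered hpre.symm hcov'
      (fun k hk => ⟨hsub' (htail' k hk), hinf ▸ htail' k hk⟩) fun k hk => hsub (htail k hk)⟩

end Plays

section Lasso

variable {d : V} {h c : List V} {k : ℕ}

theorem lassoPlay_eq_getElem (hk : k < (h ++ c).length) : lassoPlay d h c k = (h ++ c)[k] := by
  rw [lassoPlay]
  split_ifs with hkh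
  · rw [getElem_append_left hkh, getD_eq_getElem]
  · rw [length_append] at hk
    rw [getElem_append_right (by omega), Nat.mod_eq_of_lt (by omega), getD_eq_getElem]

theorem lassoPlay_add_length (hk : h.length ≤ k) :
    lassoPlay d h c (k + c.length) = lassoPlay d h c k := by
  simp only [lassoPlay, if_neg (show ¬k < h.length by omega),
    if_neg (show ¬k + c.length < h.length by omega),
    show k + c.length - h.length = k - h.length + c.length by omega, Nat.add_mod_right]

theorem lassoPlay_mem (hc : c ≠ []) (hk : h.length ≤ k) : lassoPlay d h c k ∈ c := by
  rw [lassoPlay, if_neg (by omega), getD_eq_getElem _ _ (Nat.mod_lt _ (length_pos_iff.2 hc))]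
  exact getElem_mem _

theorem InfVisit_lassoPlay (hc : c ≠ []) : InfVisit (lassoPlay d h c) = {v | v ∈ c} := by
  ext v
  constructor
  · intro hv
    obtain ⟨k, hk, rfl⟩ := hv h.length
    exact lassoPlay_mem hc hk
  · intro hv N
    obtain ⟨i, hi, rfl⟩ := getElem_of_mem hv
    refine ⟨h.length + i + N * c.length, by nlinarith [length_pos_iff.2 hc], ?_⟩
    induction N with
    | zero =>
      rw [zero_mul, add_zero, lassoPlay_eq_getElem (by simp; omega),
        getElem_append_right (by omega)]
      simp
    | succ N ih => rw [Nat.succ_mul, ← add_assoc, lassoPlay_add_length (by omega), ih]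

theorem isPlay_lassoPlay {E : V → V → Prop} (hc : c ≠ []) (hhc : IsChain E (h ++ c))
    (hwrap : ∀ x ∈ c.getLast?, ∀ y ∈ c.head?, E x y) : IsPlay E (lassoPlay d h c) := by
  have hc0 := length_pos_iff.2 hc
  intro k
  induction k using Nat.strong_induction_on with
  | _ k ih =>
  rcases lt_or_ge (k + 1) (h ++ c).length with hk | hk
  · rw [lassoPlay_eq_getElem hk, lassoPlay_eq_getElem (by omega)]
    exact isChain_iff_getElem.1 hhc k hk
  rw [length_append] at hk
  rcases hk.eq_or_lt with hk | hk
  · have hlast : lassoPlay d h c k ∈ c.getLast? := by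
      rw [lassoPlay_eq_getElem (by simp; omega), getElem_append_right (by omega),
        getLast?_eq_getElem?]
      simp [show k - h.length = c.length - 1 by omega]
    have hhead : lassoPlay d h c (k + 1) ∈ c.head? := by
      rw [← hk, lassoPlay_add_length le_rfl,
        lassoPlay_eq_getElem (by simp; omega), getElem_append_right (by omega)]
      simp [head?_eq_getElem?]
    exact hwrap _ hlast _ hhead
  · obtain ⟨j, rfl⟩ : ∃ j, k = j + c.length := ⟨k - c.length, by omega⟩
    have hj : h.length ≤ j := by omega
    rw [lassoPlay_add_length hj, add_right_comm, lassoPlay_add_length (by omega)]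
    exact ih j (by omega)

theorem prefixList_lassoPlay (hh : h ≠ []) : prefixList (lassoPlay d h c) (h.length - 1) = h := by
  have hpos := length_pos_iff.2 hh
  apply ext_getElem (by simp [prefixList]; omega)
  intro i hi _
  simp only [prefixList, getElem_map, getElem_range]
  rw [lassoPlay_eq_getElem (by simp; omega), getElem_append_left]

theorem playEquiv_lassoPlay {ρ : ℕ → V} {M : ℕ} (hh : h ≠ []) (hc : c ≠ [])
    (hstem : HistEquiv h (prefixList ρ M)) (hcov : PrefixCovered h (prefixList ρ M))
    (hcov' : PrefixCovered (prefixList ρ M) h) (hcyc : {v | v ∈ c} = InfVisit ρ) (hch : c ⊆ h)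
    (htail : ∀ k, M < k → ρ k ∈ InfVisit ρ) : PlayEquiv (lassoPlay d h c) ρ := by
  have hinf : InfVisit (lassoPlay d h c) = InfVisit ρ := (InfVisit_lassoPlay hc).trans hcyc
  have hstem' := prefixList_lassoPlay (d := d) (c := c) hh
  refine playEquiv_of_prefixList (m := h.length - 1) (m' := M) (by rwa [hstem']) (by rwa [hstem'])
    (by rwa [hstem']) hinf ?_ ?_ htail
  · rw [hstem', hinf, ← hcyc]
    exact hch
  · intro k hk
    rw [hinf, ← hcyc]
    exact lassoPlay_mem hc (by omega)

end Lasso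

theorem exists_recurrence_window [Finite V] (ρ : ℕ → V) :
    ∃ N M, N ≤ M ∧ ρ (M + 1) = ρ N ∧ (∀ k, N ≤ k → ρ k ∈ InfVisit ρ) ∧
      ∀ v ∈ InfVisit ρ, ∃ i, N ≤ i ∧ i ≤ M ∧ ρ i = v := by
  have hinf_iff : ∀ v, v ∈ InfVisit ρ ↔ ∃ᶠ k in atTop, ρ k = v := fun _ => frequently_atTop.symm
  have htail : ∀ᶠ k in atTop, ∀ v, ρ k = v → v ∈ InfVisit ρ := by
    refine eventually_all.2 fun v => ?_
    by_cases hv : v ∈ InfVisit ρ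
    · exact .of_forall fun _ _ => hv
    · exact (not_frequently.1 ((hinf_iff v).not.1 hv)).mono fun _ hk h => absurd h hk
  obtain ⟨N, hN⟩ := eventually_atTop.1 htail
  have hcover : ∀ᶠ M in atTop, ∀ v, v ∈ InfVisit ρ → ∃ i, N ≤ i ∧ i ≤ M ∧ ρ i = v := by
    refine eventually_all.2 fun v => ?_
    by_cases hv : v ∈ InfVisit ρ
    · obtain ⟨i, hi, hρi⟩ := hv N
      exact (eventually_ge_atTop i).mono fun M hM _ => ⟨i, hi, hM, hρi⟩
    · exact .of_forall fun _ h => absurd h hv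
  obtain ⟨M₀, hM₀⟩ := eventually_atTop.1 (hcover.and (eventually_ge_atTop N))
  obtain ⟨k, hk, hρk⟩ := hN N le_rfl _ rfl (M₀ + 1)
  refine ⟨N, k - 1, (hM₀ (k - 1) (by omega)).2, by rwa [Nat.sub_add_cancel (by omega)],
    fun k hk => hN k hk _ rfl, (hM₀ (k - 1) (by omega)).1⟩

theorem IsPlay.exists_cycle [Fintype V] [DecidableEq V] {E : V → V → Prop} {ρ : ℕ → V}
    (hρ : IsPlay E ρ) {N M : ℕ} (hNM : N ≤ M) (htail : ∀ k, N ≤ k → ρ k ∈ InfVisit ρ)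
    (hcover : ∀ v ∈ InfVisit ρ, ∃ i, N ≤ i ∧ i ≤ M ∧ ρ i = v) :
    ∃ c, List.IsChain E c ∧ c.head? = some (ρ N) ∧ c.getLast? = some (ρ M) ∧
      {v | v ∈ c} = InfVisit ρ ∧ c.length ≤ Fintype.card V ^ 2 := by
  have hshift : IsPlay E fun i => ρ (N + i) := fun i => hρ (N + i)
  obtain ⟨c, hc, hσc, hlen⟩ := (hshift.isChain_prefixList (M - N)).exists_histEquiv_length_le_sq
  refine ⟨c, hc, by rw [← hσc.1, head?_prefixList, add_zero], ?_, ?_,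
    hlen.trans (Nat.pow_le_pow_left (Finset.card_le_univ _) 2)⟩
  · rw [← hσc.2.1, getLast?_prefixList, Nat.add_sub_cancel' hNM]
  · rw [← hσc.2.2]
    ext v
    simp only [Set.mem_ofPred_eq, mem_prefixList]
    constructor
    · rintro ⟨i, -, rfl⟩
      exact htail _ (Nat.le_add_right N i)
    · intro hv
      obtain ⟨i, hNi, hiM, rfl⟩ := hcover v hv
      exact ⟨i - N, by omega, by rw [Nat.add_sub_cancel' hNi]⟩

end

theorem stmt_0_general {V : Type*} [Fintype V] (E : V → V → Prop)
    (ρ : ℕ → V) (hρ : IsPlay E ρ) :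
    ∃ h c : List V, c ≠ [] ∧
      h.length ≤ (Fintype.card V) ^ 3 + (Fintype.card V) ^ 2 ∧
      c.length ≤ (Fintype.card V) ^ 2 ∧
      IsPlay E (lassoPlay (ρ 0) h c) ∧
      PlayEquiv (lassoPlay (ρ 0) h c) ρ := by
  classical
  obtain ⟨N, M, hNM, hret, htail, hcover⟩ := exists_recurrence_window ρ
  obtain ⟨c, hc, hchead, hclast, hcyc, hclen⟩ := hρ.exists_cycle hNM htail hcover
  obtain ⟨h, hh, hstem, hcov, hcov', hhlen⟩ :=
    (hρ.isChain_prefixList M).exists_histEquiv_prefixCovered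
  have hc0 : c ≠ [] := List.ne_nil_of_mem (List.mem_of_mem_head? hchead)
  have hedge : E (ρ M) (ρ N) := hret ▸ hρ M
  refine ⟨h, c, hc0, ?_, hclen, isPlay_lassoPlay hc0 ?_ ?_,
    playEquiv_lassoPlay (hstem.ne_nil (prefixList_ne_nil ρ M)) hc0 hstem.symm hcov' hcov hcyc ?_
      fun k hk => htail k (by omega)⟩
  · exact hhlen.trans ((Nat.pow_le_pow_left (Finset.card_le_univ _) 3).trans (Nat.le_add_right _ _))
  · refine (List.isChain_pair.2 hedge).append_of_getLast?_head? (a := [ρ M]) hh hc ?_ hchead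
    rw [← hstem.2.1, getLast?_prefixList, List.getLast?_singleton]
  · rw [hclast, hchead]
    simpa using hedge
  · intro v hv
    obtain ⟨i, -, hi, rfl⟩ := hcover v (hcyc ▸ hv)
    exact hstem.subset (mem_prefixList.2 ⟨i, hi, rfl⟩)

theorem stmt_0 {V : Type*} [Fintype V] (E : V → V → Prop) (hE : ∀ v, ∃ w, E v w)
    (ρ : ℕ → V) (hρ : IsPlay E ρ) :
    ∃ h c : List V, c ≠ [] ∧
      h.length ≤ (Fintype.card V) ^ 3 + (Fintype.card V) ^ 2 ∧
      c.length ≤ (Fintype.card V) ^ 2 ∧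
      IsPlay E (lassoPlay (ρ 0) h c) ∧
      PlayEquiv (lassoPlay (ρ 0) h c) ρ :=
  stmt_0_general E ρ hρ
end

section
/- For a parity game on a finite graph, a requirement λ : V → {0,1} is satisfiable (i.e., from every vertex v there exists a λ-consistent play) if and only if for every vertex v there exist a cycle-free finite path h_v from v and a set W_v ⊆ V with last(h_v) ∈ W_v such that: (1) the induced subgraph on W_v is strongly connected, and (2) for every vertex u in Occ(h_v) ∪ W_v with λ(u) = 1, if player i controls u, then min κ_i(W_v) is even. -/
/-!
From some point on a play only visits vertices of its set `InfVisit ρ` of infinitely often visited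
vertices (the graph is finite), and between two late positions it stays inside that set, so
`InfVisit ρ` is strongly connected. Shortcutting the loops of the prefix up to that point gives the
cycle-free path, and consistency of the play carries over to the certificate because every suffix
of a play has the same `InfVisit`. Conversely, a certificate `(h, W)` yields the lasso play that
follows `h` and then repeats forever a closed walk through all of `W`, so that its `InfVisit` is
exactly `W`.
-/

open Filter Relation

section

variable {V : Type*} {E : V → V → Prop}

theorem infVisit_shift (ρ : ℕ → V) (k : ℕ) : InfVisit (fun i => ρ (k + i)) = InfVisit ρ := by
  ext v
  refine ⟨fun h N => ?_, fun h N => ?_⟩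
  · obtain ⟨j, hj, hv⟩ := h N
    exact ⟨k + j, by omega, hv⟩
  · obtain ⟨j, hj, hv⟩ := h (k + N)
    exact ⟨j - k, by omega, show ρ (k + (j - k)) = v by rwa [Nat.add_sub_cancel' (by omega)]⟩

theorem infVisit_subset_range (ρ : ℕ → V) : InfVisit ρ ⊆ Set.range ρ := fun _ h =>
  let ⟨k, _, hk⟩ := h 0
  ⟨k, hk⟩

theorem eventually_mem_infVisit [Finite V] (ρ : ℕ → V) : ∀ᶠ k in atTop, ρ k ∈ InfVisit ρ := by
  have hfin : ∀ v, ∀ᶠ k in atTop, v ∉ InfVisit ρ → ρ k ≠ v := by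
    intro v
    by_cases hv : v ∈ InfVisit ρ
    · exact Eventually.of_forall fun _ h => absurd hv h
    · simp only [InfVisit, Set.mem_ofPred_eq, not_forall, not_exists, not_and] at hv
      obtain ⟨N, hN⟩ := hv
      exact eventually_atTop.2 ⟨N, fun k hk _ => hN k hk⟩
  filter_upwards [eventually_all.2 hfin] with k hk
  by_contra hk'
  exact hk _ hk' rfl

theorem Function.Periodic.infVisit_eq_range {σ : ℕ → V} {p : ℕ} (hσ : Function.Periodic σ p)
    (hp : 0 < p) : InfVisit σ = Set.range σ := by
  refine (infVisit_subset_range σ).antisymm ?_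
  rintro _ ⟨k, rfl⟩ N
  exact ⟨k + N * p, le_add_left (Nat.le_mul_of_pos_right N hp), by simpa using hσ.nat_mul N k⟩

theorem infVisit_append_stream (l : List V) (s : Stream' V) :
    InfVisit (l ++ₛ s).get = InfVisit s.get := by
  rw [← infVisit_shift _ l.length]
  simp only [Stream'.get_append_right]

theorem Function.Periodic.isPlay {σ : ℕ → V} {p : ℕ} (hσ : Function.Periodic σ p) (hp : 0 < p)
    (hstep : ∀ k < p, E (σ k) (σ (k + 1))) : IsPlay E σ := by
  intro k
  have := hstep (k % p) (Nat.mod_lt k hp)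
  rwa [hσ.map_mod_nat, ← hσ.map_mod_nat (k % p + 1), Nat.mod_add_mod, hσ.map_mod_nat] at this

theorem IsPlay.transGen_restrict {ρ : ℕ → V} (hρ : IsPlay E ρ) {S : Set V} {N : ℕ}
    (hS : ∀ k ≥ N, ρ k ∈ S) {k j : ℕ} (hk : N ≤ k) (hkj : k < j) :
    TransGen (fun a b => E a b ∧ a ∈ S ∧ b ∈ S) (ρ k) (ρ j) := by
  induction j, hkj using Nat.le_induction with
  | base => exact .single ⟨hρ k, hS k hk, hS (k + 1) (by omega)⟩
  | succ j hkj ih => exact ih.tail ⟨hρ j, hS j (by omega), hS (j + 1) (by omega)⟩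

theorem isPlay_append_stream {l : List V} {s : Stream' V} (hl : l.IsChain E)
    (hs : IsPlay E s.get) (hls : ∀ x ∈ l.getLast?, E x (s.get 0)) : IsPlay E (l ++ₛ s).get := by
  intro k
  rcases lt_trichotomy (k + 1) l.length with hk | hk | hk
  · rw [Stream'.get_append_left _ _ _ (by omega), Stream'.get_append_left _ _ _ hk]
    exact List.isChain_iff_getElem.1 hl k hk
  · rw [Stream'.get_append_left _ _ _ (by omega), hk, Stream'.get_append_length]
    exact hls _ (by simp [List.getLast?_eq_getElem?, ← hk])
  · obtain ⟨i, rfl⟩ := Nat.exists_eq_add_of_le (Nat.lt_succ_iff.1 hk)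
    rw [add_assoc, Stream'.get_append_right, Stream'.get_append_right]
    exact hs i

namespace Stream'

variable {l : List V}

theorem get_cycle_of_lt (hl : l ≠ []) {i : ℕ} (hi : i < l.length) : (cycle l hl).get i = l[i] := by
  rw [cycle_eq, get_append_left _ _ _ hi]

theorem cycle_periodic (hl : l ≠ []) : Function.Periodic (cycle l hl).get l.length := by
  intro i
  conv_lhs => rw [cycle_eq]
  rw [add_comm, get_append_right]

theorem range_cycle (hl : l ≠ []) : Set.range (cycle l hl).get = {x | x ∈ l} := by
  ext x
  constructor
  · rintro ⟨k, rfl⟩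
    rw [← (cycle_periodic hl).map_mod_nat,
      get_cycle_of_lt hl (Nat.mod_lt _ (List.length_pos_of_ne_nil hl))]
    exact List.getElem_mem _
  · intro hx
    obtain ⟨i, hi, rfl⟩ := List.mem_iff_getElem.1 hx
    exact ⟨i, get_cycle_of_lt hl hi⟩

theorem isPlay_cycle (hl : l ≠ []) (hchain : l.IsChain E)
    (hwrap : E (l.getLast hl) (l.head hl)) : IsPlay E (cycle l hl).get := by
  have hpos := List.length_pos_of_ne_nil hl
  refine (cycle_periodic hl).isPlay hpos fun k hk => ?_
  rcases (by omega : k + 1 < l.length ∨ k + 1 = l.length) with hk' | hk'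
  · rw [get_cycle_of_lt hl hk, get_cycle_of_lt hl hk']
    exact List.isChain_iff_getElem.1 hchain k hk'
  · rw [hk', (cycle_periodic hl).eq, get_cycle_of_lt hl hk, get_cycle_of_lt hl hpos]
    rw [List.getLast_eq_getElem, List.head_eq_getElem] at hwrap
    obtain rfl : k = l.length - 1 := by omega
    exact hwrap

end Stream'

section Walks

variable {R : V → V → Prop}

theorem List.IsChain.exists_nodup_sublist {l : List V} (hl : l.IsChain R) :
    ∃ l' : List V, l'.IsChain R ∧ l'.Nodup ∧ l'.head? = l.head? ∧ l'.getLast? = l.getLast? ∧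
      l'.Sublist l := by
  induction l with
  | nil => exact ⟨[], .nil, List.nodup_nil, rfl, rfl, .slnil⟩
  | cons a t ih =>
    obtain ⟨l', hchain, hnd, hhead, hlast, hsub⟩ := ih hl.tail
    by_cases ha : a ∈ l'
    -- `a` recurs further along: cut the loop back to that occurrence
    · obtain ⟨s, t', rfl⟩ := List.append_of_mem ha
      have ht : t ≠ [] := by rintro rfl; simp at hlast
      refine ⟨a :: t', hchain.suffix (List.suffix_append s _),
        hnd.sublist (List.sublist_append_right s _), rfl, ?_,
        ((List.sublist_cons_self a t').trans
          ((List.sublist_append_right s _).trans hsub)).cons_cons a⟩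
      rw [← List.getLast?_append_cons s, hlast, List.getLast?_cons,
        List.getLast?_eq_some_getLast ht]
      rfl
    · refine ⟨a :: l', List.isChain_cons.2 ⟨fun y hy => hl.rel_head? (hhead ▸ hy), hchain⟩,
        List.nodup_cons.2 ⟨ha, hnd⟩, rfl, by simp [List.getLast?_cons, hlast], hsub.cons_cons a⟩

theorem List.IsChain.cons_append {a b : V} {l₁ l₂ : List V} (h₁ : (a :: l₁).IsChain R)
    (hb : l₁.getLast? = some b) (h₂ : (b :: l₂).IsChain R) : (a :: (l₁ ++ l₂)).IsChain R := by
  rw [← List.cons_append]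
  refine h₁.append h₂.tail fun x hx y hy => ?_
  obtain rfl : b = x := by simpa [List.getLast?_cons, hb] using hx
  exact h₂.rel_head? hy

theorem exists_isChain_cons_of_transGen {a b : V} (h : TransGen R a b) :
    ∃ l : List V, (a :: l).IsChain R ∧ l.getLast? = some b := by
  obtain ⟨c, hac, hcb⟩ := TransGen.head'_iff.1 h
  obtain ⟨l, hl, hlast⟩ := List.exists_isChain_cons_of_relationReflTransGen hcb
  refine ⟨c :: l, hl.cons_cons hac, ?_⟩
  rw [List.getLast?_eq_some_getLast (List.cons_ne_nil c l), hlast]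

theorem exists_closed_walk_through {e : V} (he : TransGen R e e) (s : List V)
    (hs : ∀ x ∈ s, TransGen R e x ∧ TransGen R x e) :
    ∃ c : List V, (e :: c).IsChain R ∧ c.getLast? = some e ∧ ∀ x ∈ s, x ∈ c := by
  induction s with
  | nil => simpa using exists_isChain_cons_of_transGen he
  | cons x s ih =>
    obtain ⟨c, hc, hce, hsc⟩ := ih fun y hy => hs y (List.mem_cons_of_mem x hy)
    obtain ⟨p, hp, hpx⟩ := exists_isChain_cons_of_transGen (hs x List.mem_cons_self).1
    obtain ⟨q, hq, hqe⟩ := exists_isChain_cons_of_transGen (hs x List.mem_cons_self).2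
    have hqne : q ≠ [] := by rintro rfl; simp at hqe
    refine ⟨p ++ q ++ c, (hp.cons_append hpx hq).cons_append ?_ hc, ?_, ?_⟩
    · simp [List.getLast?_append, hqe]
    · simp [List.getLast?_append, hce]
    · rintro y (_ | ⟨_, hy⟩)
      · simp [List.mem_of_getLast? hpx]
      · simp [hsc y hy]

end Walks

def IsStronglyConnectedOn (E : V → V → Prop) (S : Set V) : Prop :=
  ∀ u ∈ S, ∀ w ∈ S, TransGen (fun a b => E a b ∧ a ∈ S ∧ b ∈ S) u w

theorem IsPlay.isStronglyConnectedOn_infVisit [Finite V] {ρ : ℕ → V} (hρ : IsPlay E ρ) :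
    IsStronglyConnectedOn E (InfVisit ρ) := by
  obtain ⟨N, hN⟩ := eventually_atTop.1 (eventually_mem_infVisit ρ)
  intro u hu w hw
  obtain ⟨k, hk, rfl⟩ := hu N
  obtain ⟨j, hj, rfl⟩ := hw (k + 1)
  exact hρ.transGen_restrict hN hk hj

theorem IsPlay.exists_nodup_path_to_infVisit [Finite V] {ρ : ℕ → V} (hρ : IsPlay E ρ) :
    ∃ h : List V, h ≠ [] ∧ h.head? = some (ρ 0) ∧ h.IsChain E ∧ h.Nodup ∧
      h.getLastD (ρ 0) ∈ InfVisit ρ ∧ ∀ u ∈ h, u ∈ Set.range ρ := by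
  obtain ⟨N, hN⟩ := eventually_atTop.1 (eventually_mem_infVisit ρ)
  have hprefix : ((List.range (N + 1)).map ρ).IsChain E :=
    (List.isChain_map ρ).2 ((List.isChain_range_succ _ N).2 fun m _ => hρ m)
  obtain ⟨h, hchain, hnd, hhead, hlast, hsub⟩ := hprefix.exists_nodup_sublist
  refine ⟨h, ?_, ?_, hchain, hnd, ?_, fun u hu => ?_⟩
  · rintro rfl
    simp [List.range_succ_eq_map] at hhead
  · simp [hhead, List.range_succ_eq_map]
  · simpa [List.getLastD_eq_getLast?, hlast, List.range_succ] using hN N le_rfl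
  · obtain ⟨k, -, rfl⟩ := List.mem_map.1 (hsub.subset hu)
    exact ⟨k, rfl⟩

theorem exists_play_of_path_of_isStronglyConnectedOn {h : List V} {W : Finset V} (hne : h ≠ [])
    (hchain : h.IsChain E) (hlast : h.getLast hne ∈ W) (hconn : IsStronglyConnectedOn E W) :
    ∃ ρ : ℕ → V, IsPlay E ρ ∧ ρ 0 = h.head hne ∧ InfVisit ρ = W ∧ ∀ k, ρ k ∈ h ∨ ρ k ∈ W := by
  set e := h.getLast hne
  obtain ⟨c, hc, hce, hWc⟩ := exists_closed_walk_through (hconn e hlast e hlast) W.toList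
    fun x hx => ⟨hconn _ hlast _ (by simpa using hx), hconn _ (by simpa using hx) _ hlast⟩
  have hcne : c ≠ [] := by rintro rfl; simp at hce
  have hcW : ∀ x ∈ e :: c, x ∈ W :=
    hc.induction (· ∈ (W : Set V)) _ (fun _ _ hxy _ => hxy.2.2) fun _ => hlast
  have hcE : (e :: c).IsChain E := hc.imp fun _ _ hxy => hxy.1
  have hedge : E e (c.head hcne) := hcE.rel_head? (List.head?_eq_some_head hcne)
  have hrange : Set.range (Stream'.cycle c hcne).get = W := by
    rw [Stream'.range_cycle]
    ext x
    exact ⟨fun hx => hcW x (List.mem_cons_of_mem e hx), fun hx => hWc x (by simpa using hx)⟩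
  refine ⟨(h ++ₛ Stream'.cycle c hcne).get,
    isPlay_append_stream hchain (Stream'.isPlay_cycle hcne hcE.tail ?_) ?_, ?_, ?_, fun k => ?_⟩
  · rwa [← Option.some_inj.1 ((List.getLast?_eq_some_getLast hcne).symm.trans hce)] at hedge
  · intro x hx
    obtain rfl : x = e := by simpa [List.getLast?_eq_some_getLast hne] using hx.symm
    rwa [Stream'.get_cycle_of_lt hcne (List.length_pos_of_ne_nil hcne), ← List.head_eq_getElem]
  · rw [Stream'.get_append_left _ _ _ (List.length_pos_of_ne_nil hne), List.head_eq_getElem]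
  · rw [infVisit_append_stream,
      (Stream'.cycle_periodic hcne).infVisit_eq_range (List.length_pos_of_ne_nil hcne), hrange]
  · rcases lt_or_ge k h.length with hk | hk
    · left
      rw [Stream'.get_append_left _ _ _ hk]
      exact List.getElem_mem hk
    · obtain ⟨i, rfl⟩ := Nat.exists_eq_add_of_le hk
      right
      rw [Stream'.get_append_right]
      exact Finset.mem_coe.1 (hrange ▸ Set.mem_range_self i)

end

theorem stmt_17_general {V P : Type*} [Fintype V] (E : V → V → Prop)
    (control : V → P) (κ : P → V → ℕ) (lam : V → Bool) :
    -- `lam` is satisfiable: from every vertex there is a `lam`-consistent play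
    (∀ v : V, ∃ ρ : ℕ → V, IsPlay E ρ ∧ ρ 0 = v ∧
        ∀ k, lam (ρ k) = true →
          Even (sInf (κ (control (ρ k)) '' InfVisit (fun i => ρ (k + i))))) ↔
    -- the certificate condition
    (∀ v : V, ∃ (h : List V) (W : Finset V), h ≠ [] ∧ h.head? = some v ∧
        List.Chain' E h ∧ h.Nodup ∧ h.getLastD v ∈ W ∧
        (∀ u ∈ W, ∀ w ∈ W,
          Relation.TransGen (fun a b => E a b ∧ a ∈ W ∧ b ∈ W) u w) ∧
        (∀ u : V, (u ∈ h ∨ u ∈ W) → lam u = true →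
          Even (sInf (κ (control u) '' (W : Set V))))) := by
  constructor
  · intro hsat v
    obtain ⟨ρ, hρ, rfl, hcons⟩ := hsat v
    obtain ⟨h, hne, hhead, hchain, hnd, hlast, hrange⟩ := hρ.exists_nodup_path_to_infVisit
    have hW := (Set.toFinite (InfVisit ρ)).coe_toFinset
    have hconn : IsStronglyConnectedOn E (Set.toFinite (InfVisit ρ)).toFinset := by
      rw [hW]
      exact hρ.isStronglyConnectedOn_infVisit
    refine ⟨h, _, hne, hhead, hchain, hnd, by simpa using hlast, hconn, fun u hu hlam => ?_⟩
    obtain ⟨k, rfl⟩ : u ∈ Set.range ρ :=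
      hu.elim (hrange u) fun hu => infVisit_subset_range ρ (by simpa using hu)
    simpa only [infVisit_shift, hW] using hcons k hlam
  · intro hcert v
    obtain ⟨h, W, hne, hhead, hchain, -, hlast, hconn, hpar⟩ := hcert v
    obtain ⟨ρ, hρ, hρ0, hW, hmem⟩ := exists_play_of_path_of_isStronglyConnectedOn hne hchain
      (by simpa [List.getLastD_eq_getLast?, List.getLast?_eq_some_getLast hne] using hlast) hconn
    refine ⟨ρ, hρ, ?_, fun k hlam => ?_⟩
    · simpa [hρ0, List.head?_eq_some_head hne] using hhead
    · rw [infVisit_shift, hW]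
      exact hpar _ (hmem k) hlam

theorem stmt_17 {V P : Type*} [Fintype V] (E : V → V → Prop) (hE : ∀ v, ∃ w, E v w)
    (control : V → P) (κ : P → V → ℕ) (lam : V → Bool) :
    -- `lam` is satisfiable: from every vertex there is a `lam`-consistent play
    (∀ v : V, ∃ ρ : ℕ → V, IsPlay E ρ ∧ ρ 0 = v ∧
        ∀ k, lam (ρ k) = true →
          Even (sInf (κ (control (ρ k)) '' InfVisit (fun i => ρ (k + i))))) ↔
    -- the certificate condition
    (∀ v : V, ∃ (h : List V) (W : Finset V), h ≠ [] ∧ h.head? = some v ∧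
        List.Chain' E h ∧ h.Nodup ∧ h.getLastD v ∈ W ∧
        (∀ u ∈ W, ∀ w ∈ W,
          Relation.TransGen (fun a b => E a b ∧ a ∈ W ∧ b ∈ W) u w) ∧
        (∀ u : V, (u ∈ h ∨ u ∈ W) → lam u = true →
          Even (sInf (κ (control u) '' (W : Set V))))) :=
  stmt_17_general E control κ lam
end
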